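/- Fix m ≥ 1 and angles π/2 ≥ θ_1 ≥ … ≥ θ_m ≥ 0. Let n = 2m, C = diag(cos θ_1, …, cos θ_m), A = [[I_m, 0],[0, −I_m]] ∈ ℂ^{n×n}, X = [I_m; 0] ∈ ℂ^{n×m}, and Y = [C; √(I_m − C²)] ∈ ℂ^{n×m}. Then X and Y have orthonormal columns, range(X) is A-invariant, the principal angles between range(X) and range(Y) are exactly (θ_1, …, θ_m), and |λ(X^H A X) − λ(Y^H A Y)| arranged in nonincreasing order equals 2 sin²θ = spr(A) · sin²θ(range(X), range(Y)); i.e., the bound |λ(X^HAX) − λ(Y^HAY)| ≺_w spr(A) sin²θ holds with equality in every partial sum. -/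

import Mathlib

open Matrix Finset

/-- The entries of `x` rearranged in nonincreasing (descending) order. -/
noncomputable def sortDown {k : ℕ} (x : Fin k → ℝ) : Fin k → ℝ :=
  fun i => x (Tuple.sort x i.rev)

/-- The eigenvalues of a Hermitian matrix arranged in nonincreasing order. -/
noncomputable def eigDown {k : ℕ} {M : Matrix (Fin k) (Fin k) ℂ} (hM : M.IsHermitian) :
    Fin k → ℝ :=
  sortDown hM.eigenvalues

/-- The singular values of `B` (square roots of the eigenvalues of `Bᴴ * B`),
arranged in nonincreasing order; there are as many as columns of `B`,
extra ones (beyond `min(#rows, #cols)`) being zero. -/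
noncomputable def singDown {R : Type*} [Fintype R] {k : ℕ} (B : Matrix R (Fin k) ℂ) :
    Fin k → ℝ :=
  sortDown fun i => Real.sqrt ((Matrix.isHermitian_conjTranspose_mul_self B).eigenvalues i)

/-- The spread of the spectrum of a Hermitian matrix: `λ_max - λ_min`. -/
noncomputable def sprA {R : Type*} [Fintype R] [DecidableEq R] {A : Matrix R R ℂ}
    (hA : A.IsHermitian) : ℝ :=
  sSup (Set.range hA.eigenvalues) - sInf (Set.range hA.eigenvalues)

/-- The spectral norm of `B`, i.e. its largest singular value. -/
noncomputable def specNorm {R : Type*} [Fintype R] {k : ℕ} (B : Matrix R (Fin k) ℂ) : ℝ :=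
  sSup (Set.range (singDown B))

/-- The principal angles between the ranges of `X` and `Y` (matrices with `k`
orthonormal columns), arranged in nonincreasing order: their cosines are the
singular values of `Xᴴ * Y` arranged in nondecreasing order. -/
noncomputable def principalAngles {R : Type*} [Fintype R] {k : ℕ}
    (X Y : Matrix R (Fin k) ℂ) : Fin k → ℝ :=
  fun i => Real.arccos (singDown (Xᴴ * Y) i.rev)

/-- The sum of the `j` largest entries of `x`. -/
noncomputable def psum {k : ℕ} (x : Fin k → ℝ) (j : ℕ) : ℝ :=
  ∑ i ∈ Finset.univ.filter fun i : Fin k => (i : ℕ) < j, sortDown x i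

/-- `x` is weakly (sub-)majorized by `y`: every partial sum of the `j` largest
entries of `x` is at most the corresponding partial sum for `y`. -/
def WeakMaj {k : ℕ} (x y : Fin k → ℝ) : Prop :=
  ∀ j : ℕ, psum x j ≤ psum y j

/-- `x` is (strongly) majorized by `y`. -/
def Maj {k : ℕ} (x y : Fin k → ℝ) : Prop :=
  WeakMaj x y ∧ ∑ i, x i = ∑ i, y i

/-- The range (column space) of `X` is an invariant subspace of `A`. -/
def InvariantRange {R : Type*} [Fintype R] {k : ℕ} (A : Matrix R R ℂ)
    (X : Matrix R (Fin k) ℂ) : Prop :=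
  ∀ u : Fin k → ℂ, ∃ w : Fin k → ℂ, A.mulVec (X.mulVec u) = X.mulVec w

/-!
Both `X = [I; 0]` and `Y = [C; √(I - C²)] = [cos Θ; sin Θ]` are frames
`F(φ) = [cos Φ; sin Φ]` with diagonal `Φ = diag φ` (`φ = 0` and `φ = θ`). For such frames
`F(φ)ᴴ F(ψ) = diag cos(ψ - φ)` and, since `A` flips the sign of the lower block,
`F(φ)ᴴ A F(ψ) = diag cos(φ + ψ)`. Hence `Xᴴ Y = diag cos θ` is already a singular value
decomposition, which yields the principal angles, while the Ritz matrices `Xᴴ A X = I` and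
`Yᴴ A Y = diag cos 2θ` are diagonal, so the gaps between their sorted eigenvalues are
`1 - cos 2θᵢ = 2 sin² θᵢ`. Finally `A` has eigenvalues `±1`, so `spr A = 2`.
-/

lemma sortDown_of_monotone {k : ℕ} {x : Fin k → ℝ} (h : Monotone x) :
    sortDown x = fun i => x i.rev := by
  funext i
  simp [sortDown, Tuple.sort_eq_refl_iff_monotone.mpr h]

lemma sortDown_of_antitone {k : ℕ} {x : Fin k → ℝ} (h : Antitone x) : sortDown x = x := by
  have hsort :=
    (Tuple.comp_sort_eq_comp_iff_monotone (σ := Fin.revPerm)).mpr (h.comp Fin.rev_anti)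
  funext i
  simpa [sortDown] using (congrFun hsort i.rev).symm

lemma antitone_sortDown {k : ℕ} (x : Fin k → ℝ) : Antitone (sortDown x) :=
  (Tuple.monotone_sort x).comp_antitone Fin.rev_anti

lemma psum_sortDown {k : ℕ} (x : Fin k → ℝ) (j : ℕ) : psum (sortDown x) j = psum x j := by
  simp only [psum, sortDown_of_antitone (antitone_sortDown x)]

lemma sortDown_congr {k : ℕ} {x y : Fin k → ℝ}
    (h : Multiset.map x Finset.univ.val = Multiset.map y Finset.univ.val) :
    sortDown x = sortDown y := by
  have hperm : (List.ofFn (x ∘ Tuple.sort x)).Perm (List.ofFn (y ∘ Tuple.sort y)) := by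
    refine ((Tuple.sort x).ofFn_comp_perm x).trans (List.Perm.trans ?_
      ((Tuple.sort y).ofFn_comp_perm y).symm)
    rwa [← Multiset.coe_eq_coe, ← Fin.univ_val_map, ← Fin.univ_val_map]
  have hsorted := List.ofFn_injective (hperm.eq_of_sortedLE
    (Tuple.monotone_sort x).sortedLE_ofFn (Tuple.monotone_sort y).sortedLE_ofFn)
  funext i
  exact congrFun hsorted i.rev

open Polynomial in
lemma Matrix.IsHermitian.map_eigenvalues_eq_of_eq_diagonal {𝕜 n : Type*} [RCLike 𝕜] [Fintype n]
    [DecidableEq n] {M : Matrix n n 𝕜} (hM : M.IsHermitian) {d : n → ℝ}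
    (hd : M = diagonal fun i => (d i : 𝕜)) :
    Multiset.map hM.eigenvalues Finset.univ.val = Multiset.map d Finset.univ.val := by
  apply Multiset.map_injective (RCLike.ofReal_injective (K := 𝕜))
  rw [Multiset.map_map, Multiset.map_map, ← hM.roots_charpoly_eq_eigenvalues, hd,
    charpoly_diagonal, roots_prod _ _ (by simp [Finset.prod_ne_zero_iff, X_sub_C_ne_zero])]
  simp

lemma eigDown_eq_sortDown_of_eq_diagonal {k : ℕ} {M : Matrix (Fin k) (Fin k) ℂ}
    (hM : M.IsHermitian) {d : Fin k → ℝ} (hd : M = diagonal fun i => (d i : ℂ)) :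
    eigDown hM = sortDown d :=
  sortDown_congr (hM.map_eigenvalues_eq_of_eq_diagonal hd)

lemma singDown_diagonal_ofReal {k : ℕ} {c : Fin k → ℝ} (hc : 0 ≤ c) :
    singDown (diagonal fun i => (c i : ℂ)) = sortDown c := by
  have hgram : (diagonal fun i => (c i : ℂ))ᴴ * diagonal (fun i => (c i : ℂ))
      = diagonal fun i => ((c i ^ 2 : ℝ) : ℂ) := by
    simp [diagonal_conjTranspose, diagonal_mul_diagonal, sq]
  refine sortDown_congr ?_
  have hsq := (isHermitian_conjTranspose_mul_self _).map_eigenvalues_eq_of_eq_diagonal hgram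
  calc _ = (Multiset.map _ Finset.univ.val).map Real.sqrt := (Multiset.map_map _ _ _).symm
    _ = Multiset.map c Finset.univ.val := by
      rw [hsq, Multiset.map_map]
      exact congrArg (Multiset.map · _) (funext fun i => Real.sqrt_sq (hc i))

lemma principalAngles_eq_of_mul_eq_diagonal {R : Type*} [Fintype R] {k : ℕ}
    {X Y : Matrix R (Fin k) ℂ} {θ : Fin k → ℝ} (hrange : ∀ i, 0 ≤ θ i ∧ θ i ≤ Real.pi / 2)
    (hmono : Antitone θ) (hXY : Xᴴ * Y = diagonal fun i => (Real.cos (θ i) : ℂ)) :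
    principalAngles X Y = θ := by
  have hle_pi : ∀ i, θ i ≤ Real.pi := fun i => by linarith [(hrange i).2, Real.pi_pos]
  have hcos_nonneg : 0 ≤ fun i => Real.cos (θ i) := fun i =>
    Real.cos_nonneg_of_mem_Icc ⟨by linarith [(hrange i).1, Real.pi_pos], (hrange i).2⟩
  have hcos_mono : Monotone fun i => Real.cos (θ i) := fun i j hij =>
    Real.cos_le_cos_of_nonneg_of_le_pi (hrange j).1 (hle_pi i) (hmono hij)
  funext i
  simp only [principalAngles, hXY, singDown_diagonal_ofReal hcos_nonneg,
    sortDown_of_monotone hcos_mono, Fin.rev_rev]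
  exact Real.arccos_cos (hrange i).1 (hle_pi i)

lemma sprA_fromBlocks_one_neg_one {n : Type*} [Fintype n] [DecidableEq n] [Nonempty n]
    (hA : (fromBlocks 1 0 0 (-1) : Matrix (n ⊕ n) (n ⊕ n) ℂ).IsHermitian) : sprA hA = 2 := by
  have hdiag : (fromBlocks 1 0 0 (-1) : Matrix (n ⊕ n) (n ⊕ n) ℂ)
      = diagonal fun s => ((Sum.elim (fun _ => 1) (fun _ => -1) s : ℝ) : ℂ) := by
    rw [← diagonal_one, diagonal_neg, fromBlocks_diagonal]
    congr 1
    funext s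
    cases s <;> simp
  have hmap := hA.map_eigenvalues_eq_of_eq_diagonal hdiag
  have hrange : Set.range hA.eigenvalues = {1, -1} := by
    ext x
    simpa [Set.mem_range, eq_comm (b := x)] using congrArg (x ∈ ·) hmap
  rw [sprA, hrange, csSup_pair, csInf_pair]
  norm_num

lemma fromBlocks_one_neg_one_mul_fromRows {n k α : Type*} [Fintype n] [DecidableEq n] [Ring α]
    (P Q : Matrix n k α) :
    (fromBlocks 1 0 0 (-1) : Matrix (n ⊕ n) (n ⊕ n) α) * fromRows P Q = fromRows P (-Q) := by
  rw [fromBlocks_mul_fromRows]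
  simp

noncomputable def cosSinFrame {n : Type*} [DecidableEq n] (φ : n → ℝ) : Matrix (n ⊕ n) n ℂ :=
  fromRows (diagonal fun i => (Real.cos (φ i) : ℂ)) (diagonal fun i => (Real.sin (φ i) : ℂ))

lemma cosSinFrame_zero {n : Type*} [DecidableEq n] : cosSinFrame (0 : n → ℝ) = fromRows 1 0 := by
  simp [cosSinFrame]

section cosSinFrame

variable {n : Type*} [Fintype n] [DecidableEq n]

lemma cosSinFrame_conjTranspose_mul (φ ψ : n → ℝ) :
    (cosSinFrame φ)ᴴ * cosSinFrame ψ = diagonal fun i => (Real.cos (ψ i - φ i) : ℂ) := by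
  rw [cosSinFrame, cosSinFrame, conjTranspose_fromRows_eq_fromCols_conjTranspose,
    fromCols_mul_fromRows]
  simp only [diagonal_conjTranspose, Pi.star_def, Complex.star_def, Complex.conj_ofReal,
    diagonal_mul_diagonal, diagonal_add]
  congr 1
  funext i
  push_cast [Real.cos_sub]
  ring

lemma cosSinFrame_conjTranspose_mul_fromBlocks_mul (φ ψ : n → ℝ) :
    (cosSinFrame φ)ᴴ * (fromBlocks 1 0 0 (-1) : Matrix (n ⊕ n) (n ⊕ n) ℂ) * cosSinFrame ψ
      = diagonal fun i => (Real.cos (φ i + ψ i) : ℂ) := by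
  have hflip : (fromBlocks 1 0 0 (-1) : Matrix (n ⊕ n) (n ⊕ n) ℂ) * cosSinFrame ψ
      = cosSinFrame (-ψ) := by
    rw [cosSinFrame, cosSinFrame, fromBlocks_one_neg_one_mul_fromRows, diagonal_neg]
    simp
  rw [Matrix.mul_assoc, hflip, cosSinFrame_conjTranspose_mul]
  congr 1
  funext i
  rw [Pi.neg_apply, ← Real.cos_neg]
  ring_nf

end cosSinFrame

lemma monotone_cos_two_mul_of_antitone {ι : Type*} [Preorder ι] {θ : ι → ℝ}
    (hrange : ∀ i, 0 ≤ θ i ∧ θ i ≤ Real.pi / 2) (hmono : Antitone θ) :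
    Monotone fun i => Real.cos (2 * θ i) := fun i j hij =>
  Real.cos_le_cos_of_nonneg_of_le_pi (by linarith [(hrange j).1]) (by linarith [(hrange i).2])
    (by linarith [hmono hij])

lemma sortDown_abs_one_sub_sortDown_cos_two_mul {k : ℕ} {θ : Fin k → ℝ}
    (hmono : Monotone fun i => Real.cos (2 * θ i)) :
    sortDown (fun i => |1 - sortDown (fun i => Real.cos (2 * θ i)) i|)
      = fun i => 2 * Real.sin (θ i) ^ 2 := by
  have hanti : Antitone fun i => 2 * Real.sin (θ i) ^ 2 := fun i j hij => by
    linarith [hmono hij, Real.cos_two_mul_eq_one_sub (θ i), Real.cos_two_mul_eq_one_sub (θ j)]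
  have hrev : (fun i => |1 - sortDown (fun i => Real.cos (2 * θ i)) i|)
      = (fun i => 2 * Real.sin (θ i) ^ 2) ∘ Fin.rev := by
    funext i
    rw [sortDown_of_monotone hmono]
    simp only [Function.comp_apply, Real.cos_two_mul_eq_one_sub, sub_sub_cancel]
    exact abs_of_nonneg (by positivity)
  rw [hrev, sortDown_of_monotone (hanti.comp Fin.rev_anti)]
  simp

/-- The sharpness example: with `A = diag(I, -I)`,
`X = [I; 0]`, `Y = [C; √(I - C²)]`, `C = diag(cos θᵢ)`, the matrices `X`, `Y`
have orthonormal columns, `range X` is `A`-invariant, the principal angles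
between `range X` and `range Y` are exactly the `θᵢ`, `spr(A) = 2`, and
`|λ(Xᴴ A X) - λ(Yᴴ A Y)|` sorted equals `2 sin² θ = spr(A) sin² θ`; in
particular every partial sum in the weak majorization bound is an equality. -/
theorem ritz_error_sharpness_example
    {m : ℕ} (hm : 1 ≤ m) (θ : Fin m → ℝ)
    (hrange : ∀ i, 0 ≤ θ i ∧ θ i ≤ Real.pi / 2) (hmono : Antitone θ)
    (A : Matrix (Fin m ⊕ Fin m) (Fin m ⊕ Fin m) ℂ)
    (hAdef : A = Matrix.fromBlocks 1 0 0 (-1))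
    (X Y : Matrix (Fin m ⊕ Fin m) (Fin m) ℂ)
    (hXdef : X = Matrix.fromRows 1 0)
    (hYdef : Y = Matrix.fromRows (Matrix.diagonal fun i => (Real.cos (θ i) : ℂ))
        (Matrix.diagonal fun i => (Real.sqrt (1 - Real.cos (θ i) ^ 2) : ℂ)))
    (hA : A.IsHermitian) :
    Xᴴ * X = 1 ∧ Yᴴ * Y = 1 ∧ InvariantRange A X ∧
    principalAngles X Y = θ ∧
    sprA hA = 2 ∧
    (sortDown (fun i => |eigDown (Matrix.isHermitian_conjTranspose_mul_mul X hA) i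
        - eigDown (Matrix.isHermitian_conjTranspose_mul_mul Y hA) i|)
      = fun i => 2 * Real.sin (θ i) ^ 2) ∧
    (∀ j : ℕ,
      psum (fun i => |eigDown (Matrix.isHermitian_conjTranspose_mul_mul X hA) i
        - eigDown (Matrix.isHermitian_conjTranspose_mul_mul Y hA) i|) j
      = psum (fun i => sprA hA * Real.sin (principalAngles X Y i) ^ 2) j) := by
  have hsin : ∀ i, Real.sqrt (1 - Real.cos (θ i) ^ 2) = Real.sin (θ i) := fun i =>
    (Real.sin_eq_sqrt_one_sub_cos_sq (hrange i).1 (by linarith [(hrange i).2, Real.pi_pos])).symm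
  have hX : X = cosSinFrame 0 := by rw [hXdef, cosSinFrame_zero]
  have hY : Y = cosSinFrame θ := by simp only [hYdef, hsin, cosSinFrame]
  have hAX : A * X = X := by
    rw [hAdef, hXdef, fromBlocks_one_neg_one_mul_fromRows, neg_zero]
  have hXAX : Xᴴ * A * X = diagonal fun _ => ((1 : ℝ) : ℂ) := by
    simpa [hAdef, hX] using cosSinFrame_conjTranspose_mul_fromBlocks_mul (0 : Fin m → ℝ) 0
  have hYAY : Yᴴ * A * Y = diagonal fun i => (Real.cos (2 * θ i) : ℂ) := by
    simpa [hAdef, hY, ← two_mul] using cosSinFrame_conjTranspose_mul_fromBlocks_mul θ θ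
  have hangles : principalAngles X Y = θ :=
    principalAngles_eq_of_mul_eq_diagonal hrange hmono (by
      simpa [hX, hY] using cosSinFrame_conjTranspose_mul 0 θ)
  have : Nonempty (Fin m) := ⟨⟨0, hm⟩⟩
  have hspr : sprA hA = 2 := by
    subst hAdef
    exact sprA_fromBlocks_one_neg_one hA
  have hgap : sortDown (fun i => |eigDown (Matrix.isHermitian_conjTranspose_mul_mul X hA) i
      - eigDown (Matrix.isHermitian_conjTranspose_mul_mul Y hA) i|)
      = fun i => 2 * Real.sin (θ i) ^ 2 := by
    rw [eigDown_eq_sortDown_of_eq_diagonal _ hXAX, eigDown_eq_sortDown_of_eq_diagonal _ hYAY,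
      sortDown_of_antitone antitone_const]
    exact sortDown_abs_one_sub_sortDown_cos_two_mul (monotone_cos_two_mul_of_antitone hrange hmono)
  refine ⟨by simpa [hX] using cosSinFrame_conjTranspose_mul (0 : Fin m → ℝ) 0,
    by simpa [hY] using cosSinFrame_conjTranspose_mul θ θ, fun u => ⟨u, by rw [mulVec_mulVec, hAX]⟩,
    hangles, hspr, hgap, fun j => ?_⟩
  rw [hangles, hspr, ← hgap, psum_sortDown]
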